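/- If G is a circulant graph on n vertices, then its K_{n,n}-augmentation is circulant. Concretely, the K_{n,n}-augmentation of C_n S equals C_{2n} S̄ where S̄ = {2d : d ∈ S} ∪ {2i−1 : 1 ≤ i ≤ ⌊(n+1)/2⌋}. -/

import Mathlib

/-- The circulant graph on `ZMod n` with jump set `S`. -/
def circulantGraph (n : ℕ) (S : Set ℕ) : SimpleGraph (ZMod n) where
  Adj i j := i ≠ j ∧ ((j - i).val ∈ S ∨ (i - j).val ∈ S)
  symm := ⟨fun i j h => ⟨h.1.symm, h.2.symm⟩⟩
  loopless := ⟨fun i h => h.1 rfl⟩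

/-- The `K_{n,n}`-augmentation of a graph `G`: the join of `G` with a disjoint clone of
itself, i.e. two disjoint copies of `G` together with all edges between the two copies. -/
def knnAugmentation {V : Type*} (G : SimpleGraph V) : SimpleGraph (V ⊕ V) where
  Adj a b :=
    match a, b with
    | Sum.inl x, Sum.inl y => G.Adj x y
    | Sum.inr x, Sum.inr y => G.Adj x y
    | Sum.inl _, Sum.inr _ => True
    | Sum.inr _, Sum.inl _ => True
  symm := by
    constructor; rintro (x | x) (y | y) h <;> simp_all <;> exact h.symm
  loopless := by
    constructor; rintro (x | x) h <;> exact G.loopless.irrefl x h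

/-! Put the first copy of `ℤ/n` on the even and the clone on the odd residues mod `2n`,
via `x ↦ 2x` and `x ↦ 2x + 1`. Differences within a copy become `2(y - x)`, so they lie in
`2S` exactly when `y - x` lies in `S`; differences across copies are odd, and every odd
residue mod `2n` is `±(2i - 1)` for some `1 ≤ i ≤ ⌊(n+1)/2⌋`. -/

namespace ZMod

def doubleHom (n : ℕ) : ZMod n →+ ZMod (2 * n) :=
  ZMod.lift n ⟨2 • Int.castAddHom (ZMod (2 * n)), by
    simp only [two_nsmul, AddMonoidHom.add_apply, Int.coe_castAddHom, Int.cast_natCast, ← two_mul]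
    exact_mod_cast natCast_self (2 * n)⟩

variable {n : ℕ} [NeZero n]

lemma doubleHom_apply (x : ZMod n) : doubleHom n x = ((2 * x.val : ℕ) : ZMod (2 * n)) :=
  calc doubleHom n x = doubleHom n ((x.val : ℤ) : ZMod n) := by
        rw [Int.cast_natCast, natCast_zmod_val]
    _ = _ := by
        rw [doubleHom, lift_coe]
        push_cast
        simp [two_mul]

lemma val_doubleHom (x : ZMod n) : (doubleHom n x).val = 2 * x.val := by
  rw [doubleHom_apply, val_cast_of_lt (by have := x.val_lt; omega)]

lemma val_doubleHom_add_one (x : ZMod n) : (doubleHom n x + 1).val = 2 * x.val + 1 := by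
  rw [doubleHom_apply, ← Nat.cast_succ, val_cast_of_lt (by have := x.val_lt; omega)]

lemma val_neg_doubleHom_add_one (x : ZMod n) :
    (-(doubleHom n x + 1)).val = 2 * n - (2 * x.val + 1) := by
  rw [neg_val, if_neg, val_doubleHom_add_one]
  intro h
  simpa [h] using val_doubleHom_add_one x

lemma doubleHom_injective : Function.Injective (doubleHom n) :=
  fun x y h => val_injective n <| by
    simpa only [val_doubleHom, Nat.mul_left_cancel_iff two_pos] using congrArg val h

end ZMod

lemma circulantGraph_adj_add_right {n : ℕ} (S : Set ℕ) (i j c : ZMod n) :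
    (circulantGraph n S).Adj (i + c) (j + c) ↔ (circulantGraph n S).Adj i j := by
  simp only [circulantGraph, add_sub_add_right_eq_sub, ne_eq, add_left_inj]

def knnJumpSet (n : ℕ) (S : Set ℕ) : Set ℕ :=
  {e | ∃ d ∈ S, e = 2 * d} ∪ {e | ∃ i, 1 ≤ i ∧ i ≤ (n + 1) / 2 ∧ e = 2 * i - 1}

section knnJumpSet

variable {n : ℕ} {S : Set ℕ}

lemma two_mul_mem_knnJumpSet {d : ℕ} : 2 * d ∈ knnJumpSet n S ↔ d ∈ S := by
  constructor
  · rintro (⟨d', hd', hdd'⟩ | ⟨i, hi, -, hid⟩)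
    · rwa [Nat.mul_left_cancel two_pos hdd']
    · omega
  · exact fun hd => Or.inl ⟨d, hd, rfl⟩

lemma two_mul_add_one_mem_knnJumpSet {v : ℕ} (hv : v < n) :
    2 * v + 1 ∈ knnJumpSet n S ∨ 2 * n - (2 * v + 1) ∈ knnJumpSet n S := by
  rcases le_or_gt (2 * v + 1) n with h | h
  · exact Or.inl <| Or.inr ⟨v + 1, by omega, by omega, by omega⟩
  · exact Or.inr <| Or.inr ⟨n - v, by omega, by omega, by omega⟩

end knnJumpSet

section Interleave

open ZMod

variable {n : ℕ} [NeZero n] (S : Set ℕ)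

lemma circulantGraph_knnJumpSet_adj_doubleHom (x y : ZMod n) :
    (circulantGraph (2 * n) (knnJumpSet n S)).Adj (doubleHom n x) (doubleHom n y) ↔
      (circulantGraph n S).Adj x y := by
  simp only [circulantGraph, ← map_sub, val_doubleHom, two_mul_mem_knnJumpSet,
    doubleHom_injective.ne_iff]

lemma circulantGraph_knnJumpSet_adj_doubleHom_doubleHom_add_one (x y : ZMod n) :
    (circulantGraph (2 * n) (knnJumpSet n S)).Adj (doubleHom n x) (doubleHom n y + 1) := by
  have h_odd : doubleHom n y + 1 - doubleHom n x = doubleHom n (y - x) + 1 := by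
    rw [map_sub]; abel
  have h_neg : doubleHom n x - (doubleHom n y + 1) = -(doubleHom n (y - x) + 1) := by
    rw [map_sub]; abel
  refine ⟨fun h => ?_, ?_⟩
  · have := congrArg val h
    rw [val_doubleHom, val_doubleHom_add_one] at this
    omega
  · rw [h_odd, h_neg, val_doubleHom_add_one, val_neg_doubleHom_add_one]
    exact two_mul_add_one_mem_knnJumpSet (y - x).val_lt

def interleave (n : ℕ) : ZMod n ⊕ ZMod n → ZMod (2 * n) :=
  Sum.elim (doubleHom n) (doubleHom n · + 1)

lemma interleave_bijective : Function.Bijective (interleave n) := by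
  rw [Fintype.bijective_iff_injective_and_card, Fintype.card_sum, ZMod.card, ZMod.card]
  refine ⟨?_, (two_mul n).symm⟩
  rintro (x | x) (y | y) h <;> have h_val := congrArg val h <;>
    simp only [interleave, Sum.elim_inl, Sum.elim_inr, val_doubleHom, val_doubleHom_add_one]
      at h_val
  · exact congrArg Sum.inl (val_injective n (by omega))
  · omega
  · omega
  · exact congrArg Sum.inr (val_injective n (by omega))

noncomputable def knnAugmentationCirculantIso :
    knnAugmentation (circulantGraph n S) ≃g circulantGraph (2 * n) (knnJumpSet n S) where
  toEquiv := Equiv.ofBijective (interleave n) interleave_bijective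
  map_rel_iff' := by
    rintro (x | x) (y | y)
    · exact circulantGraph_knnJumpSet_adj_doubleHom S x y
    · exact iff_true_intro (circulantGraph_knnJumpSet_adj_doubleHom_doubleHom_add_one S x y)
    · exact iff_true_intro (circulantGraph_knnJumpSet_adj_doubleHom_doubleHom_add_one S y x).symm
    · exact (circulantGraph_adj_add_right _ _ _ _).trans
        (circulantGraph_knnJumpSet_adj_doubleHom S x y)

end Interleave

theorem knnAugmentation_circulant_general
    (n : ℕ) (hn : 0 < n) (S : Set ℕ) :
    Nonempty (knnAugmentation (circulantGraph n S) ≃g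
      circulantGraph (2 * n)
        ({e | ∃ d ∈ S, e = 2 * d} ∪ {e | ∃ i, 1 ≤ i ∧ i ≤ (n + 1) / 2 ∧ e = 2 * i - 1})) :=
  have : NeZero n := ⟨hn.ne'⟩
  ⟨knnAugmentationCirculantIso S⟩

/-- The `K_{n,n}`-augmentation of the circulant graph `C_n S` is the circulant graph
`C_{2n} S̄` where `S̄ = {2d : d ∈ S} ∪ {2i - 1 : 1 ≤ i ≤ ⌊(n+1)/2⌋}`; in particular the
`K_{n,n}`-augmentation of a circulant graph is circulant. -/
theorem knnAugmentation_circulant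
    (n : ℕ) (hn : 0 < n) (S : Set ℕ) (hS : S ⊆ Set.Icc 1 (n / 2)) :
    Nonempty (knnAugmentation (circulantGraph n S) ≃g
      circulantGraph (2 * n)
        ({e | ∃ d ∈ S, e = 2 * d} ∪ {e | ∃ i, 1 ≤ i ∧ i ≤ (n + 1) / 2 ∧ e = 2 * i - 1})) :=
  knnAugmentation_circulant_general n hn S
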